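/- For arbitrary bounded measurable estimates μ̂, ω̂ and every bounded measurable h:𝒳→ℝ, the DR leakage factorizes into a product of nuisance errors: E[(φ(V;(μ̂,ω̂)) − τ₀(X))·h(X)] = E[(ω̂(T,X) − ω₀(T,X))·(μ₀(T,X) − μ̂(T,X))·h(X)], where τ₀(X) = μ₀(1,X) − μ₀(0,X). -/

import Mathlib

/-!
Adding and subtracting `ω₀(T,X)·(μ₀ - μ̂)(T,X)·h(X)` leaves, besides the product term, two terms
of mean zero. The first is `ω̂(T,X)·h(X)·(Y - μ₀(T,X))`, orthogonal to every bounded function of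
`(T,X)` because `μ₀(T,X) = E[Y | T,X]`. The second is
`ω₀(T,X)·g(T,X) - (g(1,X) - g(0,X))` with `g = (μ₀ - μ̂)·h`, which has mean zero by the
inverse-propensity identity `E[k(X)·T] = E[k(X)·π₀(X)]` (from `E[T | X] = π₀(X)`) applied to
`T` and to `1 - T`. Overlap makes `ω₀` bounded, and it also transfers integrability from `g(T,X)`
to `g(1,X)` and `g(0,X)`: the identity holds for lower integrals of every nonnegative `k`, with no
integrability assumption, and `π₀ ≥ c` then bounds `E|g(1,X)|` by `E|g(T,X)|/c`.
-/

open MeasureTheory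
open scoped ENNReal

noncomputable section

section CondExp

variable {Ω : Type*} {m m₀ : MeasurableSpace Ω} {μ : Measure Ω}

theorem integral_mul_condExp_of_stronglyMeasurable_left (hm : m ≤ m₀) [SigmaFinite (μ.trim hm)]
    {f g : Ω → ℝ} (hf : StronglyMeasurable[m] f) (hfg : Integrable (fun ω => f ω * g ω) μ)
    (hg : Integrable g μ) :
    ∫ ω, f ω * g ω ∂μ = ∫ ω, f ω * μ[g|m] ω ∂μ :=
  (integral_condExp hm).symm.trans
    (integral_congr_ae (condExp_mul_of_stronglyMeasurable_left hf hfg hg))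

theorem lintegral_ofReal_condExp_mul (hm : m ≤ m₀) [SigmaFinite (μ.trim hm)] {f : Ω → ℝ}
    (hf : Integrable f μ) (hf₀ : 0 ≤ᵐ[μ] f) {k : Ω → ℝ≥0∞} (hk : Measurable[m] k) :
    ∫⁻ ω, ENNReal.ofReal (μ[f|m] ω) * k ω ∂μ = ∫⁻ ω, ENNReal.ofReal (f ω) * k ω ∂μ := by
  have htrim : (μ.withDensity fun ω => ENNReal.ofReal (μ[f|m] ω)).trim hm
      = (μ.withDensity fun ω => ENNReal.ofReal (f ω)).trim hm := by
    refine @Measure.ext _ m _ _ fun s hs => ?_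
    rw [trim_measurableSet_eq hm hs, trim_measurableSet_eq hm hs, withDensity_apply _ (hm s hs),
      withDensity_apply _ (hm s hs),
      ← ofReal_integral_eq_lintegral_ofReal integrable_condExp.integrableOn
        (ae_restrict_of_ae (condExp_nonneg hf₀)),
      ← ofReal_integral_eq_lintegral_ofReal hf.integrableOn (ae_restrict_of_ae hf₀),
      setIntegral_condExp hm hf hs]
  calc ∫⁻ ω, ENNReal.ofReal (μ[f|m] ω) * k ω ∂μ
      = ∫⁻ ω, k ω ∂(μ.withDensity fun ω => ENNReal.ofReal (μ[f|m] ω)).trim hm := by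
        rw [lintegral_trim hm hk, lintegral_withDensity_eq_lintegral_mul₀
          (stronglyMeasurable_condExp.measurable.mono hm le_rfl).ennreal_ofReal.aemeasurable
          (hk.mono hm le_rfl).aemeasurable]
        rfl
    _ = ∫⁻ ω, ENNReal.ofReal (f ω) * k ω ∂μ := by
        rw [htrim, lintegral_trim hm hk, lintegral_withDensity_eq_lintegral_mul₀
          hf.aemeasurable.ennreal_ofReal (hk.mono hm le_rfl).aemeasurable]
        rfl

theorem integral_mul_sub_eq_zero_of_ae_eq_condExp (hm : m ≤ m₀) [SigmaFinite (μ.trim hm)]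
    {f g g' : Ω → ℝ} (hf : StronglyMeasurable[m] f) {C : ℝ} (hfC : ∀ ω, ‖f ω‖ ≤ C)
    (hg : Integrable g μ) (hg' : g' =ᵐ[μ] μ[g|m]) :
    ∫ ω, f ω * (g ω - g' ω) ∂μ = 0 := by
  rw [integral_congr_ae (hg'.mono fun ω h => congrArg (fun z => f ω * (g ω - z)) h)]
  have hfg : Integrable (fun ω => f ω * g ω) μ :=
    hg.bdd_mul (hf.mono hm).aestronglyMeasurable (ae_of_all _ hfC)
  have hfcg : Integrable (fun ω => f ω * μ[g|m] ω) μ :=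
    integrable_condExp.bdd_mul (hf.mono hm).aestronglyMeasurable (ae_of_all _ hfC)
  simp only [mul_sub]
  rw [integral_sub hfg hfcg, integral_mul_condExp_of_stronglyMeasurable_left hm hf hfg hg,
    sub_self]

theorem MeasureTheory.Integrable.of_mul_of_le_abs {f g : Ω → ℝ}
    (hfg : Integrable (fun ω => f ω * g ω) μ) (hf : AEStronglyMeasurable f μ) {c : ℝ}
    (hc : 0 < c) (hg : ∀ ω, c ≤ |g ω|) :
    Integrable f μ := by
  refine (hfg.const_mul c⁻¹).mono hf (ae_of_all _ fun ω => ?_)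
  rw [Real.norm_eq_abs, Real.norm_eq_abs, abs_mul, abs_mul, abs_inv, abs_of_pos hc,
    ← mul_assoc, inv_mul_eq_div]
  calc |f ω| = |f ω| / c * c := (div_mul_cancel₀ _ hc.ne').symm
    _ ≤ |f ω| / c * |g ω| := by gcongr; exact hg ω

end CondExp

section Propensity

variable {Ω 𝒳 : Type*} [MeasurableSpace Ω] [MeasurableSpace 𝒳] {P : Measure Ω} [IsFiniteMeasure P]
  {X : Ω → 𝒳} {T : Ω → ℝ} {π : 𝒳 → ℝ}

theorem integrable_comp_mul_of_ae_eq_condExp (hX : Measurable X) (hT : Integrable T P)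
    (hT₀ : 0 ≤ᵐ[P] T) (hπ : (fun ω => π (X ω)) =ᵐ[P] P[T|MeasurableSpace.comap X inferInstance])
    {k : 𝒳 → ℝ} (hk : Measurable k) (hkT : Integrable (fun ω => k (X ω) * T ω) P) :
    Integrable (fun ω => k (X ω) * π (X ω)) P := by
  have hπ₀ : ∀ᵐ ω ∂P, 0 ≤ π (X ω) := by
    filter_upwards [hπ, condExp_nonneg hT₀] with ω h h₀ using h ▸ h₀
  refine ⟨(hk.comp hX).aestronglyMeasurable.mul
    (integrable_condExp.aestronglyMeasurable.congr hπ.symm), ?_⟩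
  have hkX : Measurable[MeasurableSpace.comap X inferInstance] fun ω => ‖k (X ω)‖ₑ :=
    measurable_enorm.comp (hk.comp (comap_measurable X))
  calc ∫⁻ ω, ‖k (X ω) * π (X ω)‖ₑ ∂P
      = ∫⁻ ω, ENNReal.ofReal (P[T|MeasurableSpace.comap X inferInstance] ω) * ‖k (X ω)‖ₑ ∂P := by
        refine lintegral_congr_ae ?_
        filter_upwards [hπ, hπ₀] with ω h h₀
        rw [enorm_mul, Real.enorm_eq_ofReal h₀, h, mul_comm]
    _ = ∫⁻ ω, ENNReal.ofReal (T ω) * ‖k (X ω)‖ₑ ∂P :=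
        lintegral_ofReal_condExp_mul hX.comap_le hT hT₀ hkX
    _ = ∫⁻ ω, ‖k (X ω) * T ω‖ₑ ∂P := by
        refine lintegral_congr_ae ?_
        filter_upwards [hT₀] with ω h₀
        rw [enorm_mul, Real.enorm_eq_ofReal h₀, mul_comm]
    _ < ∞ := hkT.2

theorem integral_comp_mul_of_ae_eq_condExp (hX : Measurable X) (hT : Integrable T P)
    (hπ : (fun ω => π (X ω)) =ᵐ[P] P[T|MeasurableSpace.comap X inferInstance])
    {k : 𝒳 → ℝ} (hk : Measurable k) (hkT : Integrable (fun ω => k (X ω) * T ω) P) :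
    ∫ ω, k (X ω) * T ω ∂P = ∫ ω, k (X ω) * π (X ω) ∂P := by
  rw [integral_mul_condExp_of_stronglyMeasurable_left (f := fun ω => k (X ω)) hX.comap_le
    (hk.comp (comap_measurable X)).stronglyMeasurable hkT hT]
  exact integral_congr_ae (hπ.mono fun ω h => congrArg (k (X ω) * ·) h.symm)

theorem integrable_comp_of_ae_eq_condExp (hX : Measurable X) (hT : Integrable T P) (hT₀ : 0 ≤ᵐ[P] T)
    (hπ : (fun ω => π (X ω)) =ᵐ[P] P[T|MeasurableSpace.comap X inferInstance])
    {c : ℝ} (hc : 0 < c) (hπc : ∀ x, c ≤ π x)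
    {k : 𝒳 → ℝ} (hk : Measurable k) (hkT : Integrable (fun ω => k (X ω) * T ω) P) :
    Integrable (fun ω => k (X ω)) P :=
  (integrable_comp_mul_of_ae_eq_condExp hX hT hT₀ hπ hk hkT).of_mul_of_le_abs
    (hk.comp hX).aestronglyMeasurable hc fun _ => (hπc _).trans (le_abs_self _)

theorem integral_div_mul_of_ae_eq_condExp (hX : Measurable X) (hT : Integrable T P)
    (hπ : (fun ω => π (X ω)) =ᵐ[P] P[T|MeasurableSpace.comap X inferInstance])
    (hπ_meas : Measurable π) (hπ₀ : ∀ x, π x ≠ 0) {k : 𝒳 → ℝ} (hk : Measurable k)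
    (hkT : Integrable (fun ω => k (X ω) / π (X ω) * T ω) P) :
    ∫ ω, k (X ω) / π (X ω) * T ω ∂P = ∫ ω, k (X ω) ∂P :=
  (integral_comp_mul_of_ae_eq_condExp (k := fun x => k x / π x) hX hT hπ (hk.div hπ_meas) hkT).trans
    (integral_congr_ae (ae_of_all _ fun _ => div_mul_cancel₀ _ (hπ₀ _)))

theorem integrable_of_forall_eq_zero_or_one (hT : Measurable T) (hT01 : ∀ ω, T ω = 0 ∨ T ω = 1) :
    Integrable T P :=
  .of_bound hT.aestronglyMeasurable 1
    (ae_of_all _ fun ω => by rcases hT01 ω with h | h <;> simp [h])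

theorem one_sub_ae_eq_condExp_one_sub (hX : Measurable X) (hT : Integrable T P)
    (hπ : (fun ω => π (X ω)) =ᵐ[P] P[T|MeasurableSpace.comap X inferInstance]) :
    (fun ω => 1 - π (X ω)) =ᵐ[P] P[fun ω => 1 - T ω|MeasurableSpace.comap X inferInstance] := by
  filter_upwards [condExp_sub (integrable_const 1) hT (MeasurableSpace.comap X inferInstance), hπ]
    with ω h hω
  rw [show (fun ω => 1 - T ω) = (fun _ => (1 : ℝ)) - T from rfl, h, Pi.sub_apply,
    condExp_const hX.comap_le, hω]

theorem integrable_comp_one_of_overlap (hX : Measurable X) (hT : Measurable T)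
    (hT01 : ∀ ω, T ω = 0 ∨ T ω = 1)
    (hπ : (fun ω => π (X ω)) =ᵐ[P] P[T|MeasurableSpace.comap X inferInstance])
    {c : ℝ} (hc : 0 < c) (hπc : ∀ x, c ≤ π x)
    {g : ℝ → 𝒳 → ℝ} (hg : Measurable (g 1)) (hgTX : Integrable (fun ω => g (T ω) (X ω)) P) :
    Integrable (fun ω => g 1 (X ω)) P := by
  have hg₁T : Integrable (fun ω => g 1 (X ω) * T ω) P := by
    refine (hgTX.mul_bdd hT.aestronglyMeasurable (c := 1) (ae_of_all _ fun ω => ?_)).congr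
      (ae_of_all _ fun ω => ?_) <;> rcases hT01 ω with h | h <;> simp [h]
  exact integrable_comp_of_ae_eq_condExp hX (integrable_of_forall_eq_zero_or_one hT hT01)
    (ae_of_all _ fun ω => by rcases hT01 ω with h | h <;> simp [h]) hπ hc hπc hg hg₁T

theorem integrable_comp_zero_of_overlap (hX : Measurable X) (hT : Measurable T)
    (hT01 : ∀ ω, T ω = 0 ∨ T ω = 1)
    (hπ : (fun ω => π (X ω)) =ᵐ[P] P[T|MeasurableSpace.comap X inferInstance])
    {c : ℝ} (hc : 0 < c) (hπc : ∀ x, π x ≤ 1 - c)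
    {g : ℝ → 𝒳 → ℝ} (hg : Measurable (g 0)) (hgTX : Integrable (fun ω => g (T ω) (X ω)) P) :
    Integrable (fun ω => g 0 (X ω)) P := by
  have hT' := integrable_of_forall_eq_zero_or_one (P := P) hT hT01
  have hg₀T : Integrable (fun ω => g 0 (X ω) * (1 - T ω)) P := by
    refine (hgTX.mul_bdd (hT.const_sub 1).aestronglyMeasurable (c := 1)
      (ae_of_all _ fun ω => ?_)).congr (ae_of_all _ fun ω => ?_) <;>
      rcases hT01 ω with h | h <;> simp [h]
  exact integrable_comp_of_ae_eq_condExp (T := fun ω => 1 - T ω) (π := fun x => 1 - π x) hX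
    ((integrable_const 1).sub hT') (ae_of_all _ fun ω => by rcases hT01 ω with h | h <;> simp [h])
    (one_sub_ae_eq_condExp_one_sub hX hT' hπ) hc (fun x => by linarith [hπc x]) hg hg₀T

end Propensity

section IPWWeight

variable {𝒳 : Type*} {π : 𝒳 → ℝ}

def ipwWeight (π : 𝒳 → ℝ) (t : ℝ) (x : 𝒳) : ℝ :=
  (2 * t - 1) / (t * π x + (1 - t) * (1 - π x))

@[simp]
theorem ipwWeight_one (π : 𝒳 → ℝ) (x : 𝒳) : ipwWeight π 1 x = (π x)⁻¹ := by
  norm_num [ipwWeight]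

@[simp]
theorem ipwWeight_zero (π : 𝒳 → ℝ) (x : 𝒳) : ipwWeight π 0 x = -(1 - π x)⁻¹ := by
  norm_num [ipwWeight, neg_div]

theorem abs_ipwWeight_le {c t : ℝ} {x : 𝒳} (hc : 0 < c) (hπc : c ≤ π x ∧ π x ≤ 1 - c)
    (ht : t = 0 ∨ t = 1) : |ipwWeight π t x| ≤ c⁻¹ := by
  rcases ht with rfl | rfl
  · rw [ipwWeight_zero, abs_neg, abs_inv, abs_of_pos (by linarith)]
    exact inv_anti₀ hc (by linarith)
  · rw [ipwWeight_one, abs_inv, abs_of_pos (by linarith)]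
    exact inv_anti₀ hc hπc.1

variable [MeasurableSpace 𝒳]

theorem measurable_ipwWeight (hπ : Measurable π) :
    Measurable fun p : ℝ × 𝒳 => ipwWeight π p.1 p.2 := by
  unfold ipwWeight
  fun_prop

variable {Ω : Type*} [MeasurableSpace Ω] {P : Measure Ω} {X : Ω → 𝒳} {T : Ω → ℝ}

theorem integrable_ipwWeight_mul (hX : Measurable X) (hT : Measurable T)
    (hT01 : ∀ ω, T ω = 0 ∨ T ω = 1) (hπ_meas : Measurable π)
    {c : ℝ} (hc : 0 < c) (hπc : ∀ x, c ≤ π x ∧ π x ≤ 1 - c)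
    {f : Ω → ℝ} (hf : Integrable f P) :
    Integrable (fun ω => ipwWeight π (T ω) (X ω) * f ω) P :=
  hf.bdd_mul ((measurable_ipwWeight hπ_meas).comp (hT.prodMk hX)).aestronglyMeasurable
    (ae_of_all _ fun ω => abs_ipwWeight_le hc (hπc _) (hT01 ω))

theorem integral_ipwWeight_mul [IsFiniteMeasure P] (hX : Measurable X) (hT : Measurable T)
    (hT01 : ∀ ω, T ω = 0 ∨ T ω = 1) (hπ_meas : Measurable π)
    (hπ : (fun ω => π (X ω)) =ᵐ[P] P[T|MeasurableSpace.comap X inferInstance])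
    {c : ℝ} (hc : 0 < c) (hπc : ∀ x, c ≤ π x ∧ π x ≤ 1 - c)
    {g : ℝ → 𝒳 → ℝ} (hg₁ : Measurable (g 1)) (hg₀ : Measurable (g 0))
    (hgTX : Integrable (fun ω => g (T ω) (X ω)) P) :
    ∫ ω, ipwWeight π (T ω) (X ω) * g (T ω) (X ω) ∂P
      = ∫ ω, g 1 (X ω) ∂P - ∫ ω, g 0 (X ω) ∂P := by
  set F := fun ω => ipwWeight π (T ω) (X ω) * g (T ω) (X ω) with hF_def
  have hF := integrable_ipwWeight_mul hX hT hT01 hπ_meas hc hπc hgTX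
  have hT' := integrable_of_forall_eq_zero_or_one (P := P) hT hT01
  have hFT : Integrable (fun ω => F ω * T ω) P :=
    hF.mul_bdd hT.aestronglyMeasurable (c := 1)
      (ae_of_all _ fun ω => by rcases hT01 ω with h | h <;> simp [h])
  have hF1T : Integrable (fun ω => F ω * (1 - T ω)) P :=
    hF.mul_bdd (hT.const_sub 1).aestronglyMeasurable (c := 1)
      (ae_of_all _ fun ω => by rcases hT01 ω with h | h <;> simp [h])
  have h₁ : ∀ ω, F ω * T ω = g 1 (X ω) / π (X ω) * T ω := fun ω => by
    rcases hT01 ω with h | h <;> simp [hF_def, h, div_eq_mul_inv, mul_comm]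
  have h₀ : ∀ ω, F ω * (1 - T ω) = -(g 0 (X ω) / (1 - π (X ω)) * (1 - T ω)) := fun ω => by
    rcases hT01 ω with h | h <;> simp [hF_def, h, div_eq_mul_inv, mul_comm]
  have hπ₀ : ∀ x, π x ≠ 0 := fun x => (hc.trans_le (hπc x).1).ne'
  have hπ₁ : ∀ x, 1 - π x ≠ 0 := fun x => by linarith [(hπc x).2]
  calc ∫ ω, F ω ∂P = ∫ ω, F ω * T ω ∂P + ∫ ω, F ω * (1 - T ω) ∂P := by
        rw [← integral_add hFT hF1T]
        exact integral_congr_ae (ae_of_all _ fun ω => by ring)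
    _ = ∫ ω, g 1 (X ω) / π (X ω) * T ω ∂P
          - ∫ ω, g 0 (X ω) / (1 - π (X ω)) * (1 - T ω) ∂P := by
        simp_rw [h₁, h₀, integral_neg, sub_eq_add_neg]
    _ = ∫ ω, g 1 (X ω) ∂P - ∫ ω, g 0 (X ω) ∂P := by
        rw [integral_div_mul_of_ae_eq_condExp hX hT' hπ hπ_meas hπ₀ hg₁
            (hFT.congr (ae_of_all _ h₁)),
          integral_div_mul_of_ae_eq_condExp (T := fun ω => 1 - T ω) (π := fun x => 1 - π x) hX
            ((integrable_const 1).sub hT') (one_sub_ae_eq_condExp_one_sub hX hT' hπ)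
            (hπ_meas.const_sub 1) hπ₁ hg₀
            (hF1T.neg.congr (ae_of_all _ fun ω => by simp only [Pi.neg_apply, h₀, neg_neg]))]

theorem integrable_ipwWeight_mul_sub [IsFiniteMeasure P] (hX : Measurable X) (hT : Measurable T)
    (hT01 : ∀ ω, T ω = 0 ∨ T ω = 1) (hπ_meas : Measurable π)
    (hπ : (fun ω => π (X ω)) =ᵐ[P] P[T|MeasurableSpace.comap X inferInstance])
    {c : ℝ} (hc : 0 < c) (hπc : ∀ x, c ≤ π x ∧ π x ≤ 1 - c)
    {g : ℝ → 𝒳 → ℝ} (hg₁ : Measurable (g 1)) (hg₀ : Measurable (g 0))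
    (hgTX : Integrable (fun ω => g (T ω) (X ω)) P) :
    Integrable (fun ω => ipwWeight π (T ω) (X ω) * g (T ω) (X ω) - (g 1 (X ω) - g 0 (X ω))) P :=
  (integrable_ipwWeight_mul hX hT hT01 hπ_meas hc hπc hgTX).sub
    ((integrable_comp_one_of_overlap hX hT hT01 hπ hc (fun x => (hπc x).1) hg₁ hgTX).sub
      (integrable_comp_zero_of_overlap hX hT hT01 hπ hc (fun x => (hπc x).2) hg₀ hgTX))

theorem integral_ipwWeight_mul_sub_eq_zero [IsFiniteMeasure P] (hX : Measurable X)
    (hT : Measurable T) (hT01 : ∀ ω, T ω = 0 ∨ T ω = 1) (hπ_meas : Measurable π)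
    (hπ : (fun ω => π (X ω)) =ᵐ[P] P[T|MeasurableSpace.comap X inferInstance])
    {c : ℝ} (hc : 0 < c) (hπc : ∀ x, c ≤ π x ∧ π x ≤ 1 - c)
    {g : ℝ → 𝒳 → ℝ} (hg₁ : Measurable (g 1)) (hg₀ : Measurable (g 0))
    (hgTX : Integrable (fun ω => g (T ω) (X ω)) P) :
    ∫ ω, ipwWeight π (T ω) (X ω) * g (T ω) (X ω) - (g 1 (X ω) - g 0 (X ω)) ∂P = 0 := by
  have hg₁X := integrable_comp_one_of_overlap hX hT hT01 hπ hc (fun x => (hπc x).1) hg₁ hgTX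
  have hg₀X := integrable_comp_zero_of_overlap hX hT hT01 hπ hc (fun x => (hπc x).2) hg₀ hgTX
  have hD : Integrable (fun ω => g 1 (X ω) - g 0 (X ω)) P := hg₁X.sub hg₀X
  rw [integral_sub (integrable_ipwWeight_mul hX hT hT01 hπ_meas hc hπc hgTX) hD,
    integral_sub hg₁X hg₀X,
    integral_ipwWeight_mul hX hT hT01 hπ_meas hπ hc hπc hg₁ hg₀ hgTX, sub_self]

end IPWWeight

theorem dr_leakage_product_general
    {Ω 𝒳 : Type*} [MeasurableSpace Ω] [MeasurableSpace 𝒳]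
    (P : Measure Ω) [IsProbabilityMeasure P]
    (X : Ω → 𝒳) (T Y : Ω → ℝ)
    (hX : Measurable X) (hT : Measurable T)
    (hT01 : ∀ ω, T ω = 0 ∨ T ω = 1) (hY1 : Integrable Y P)
    (μ₀ : ℝ → 𝒳 → ℝ) (hμ₀_meas : Measurable fun p : ℝ × 𝒳 => μ₀ p.1 p.2)
    (hμ₀ : (fun ω => μ₀ (T ω) (X ω))
        =ᵐ[P] P[Y | MeasurableSpace.comap (fun ω => (T ω, X ω)) inferInstance])
    (π₀ : 𝒳 → ℝ) (hπ₀_meas : Measurable π₀)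
    (hπ₀ : (fun ω => π₀ (X ω)) =ᵐ[P] P[T | MeasurableSpace.comap X inferInstance])
    (c : ℝ) (hc0 : 0 < c)
    (hc : ∀ x, c ≤ π₀ x ∧ π₀ x ≤ 1 - c)
    (w₀ : ℝ → 𝒳 → ℝ)
    (hw₀ : ∀ t x, w₀ t x = (2 * t - 1) / (t * π₀ x + (1 - t) * (1 - π₀ x)))
    (μh wh : ℝ → 𝒳 → ℝ)
    (hμh_meas : Measurable fun p : ℝ × 𝒳 => μh p.1 p.2)
    (hwh_meas : Measurable fun p : ℝ × 𝒳 => wh p.1 p.2)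
    (B : ℝ) (hμh_bdd : ∀ t x, |μh t x| ≤ B) (hwh_bdd : ∀ t x, |wh t x| ≤ B) :
    ∀ (h : 𝒳 → ℝ), Measurable h → (∃ Bh : ℝ, ∀ x, |h x| ≤ Bh) →
      (∫ ω, (wh (T ω) (X ω) * (Y ω - μh (T ω) (X ω)) + μh 1 (X ω) - μh 0 (X ω)
            - (μ₀ 1 (X ω) - μ₀ 0 (X ω))) * h (X ω) ∂P)
        = ∫ ω, (wh (T ω) (X ω) - w₀ (T ω) (X ω))
            * (μ₀ (T ω) (X ω) - μh (T ω) (X ω)) * h (X ω) ∂P := by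
  rintro h hh ⟨Bh, hBh⟩
  obtain rfl : w₀ = ipwWeight π₀ := funext₂ hw₀
  have hTX : Measurable fun ω => (T ω, X ω) := hT.prodMk hX
  have hhX : AEStronglyMeasurable (fun ω => h (X ω)) P := (hh.comp hX).aestronglyMeasurable
  have hμ₀TX : Integrable (fun ω => μ₀ (T ω) (X ω)) P := integrable_condExp.congr hμ₀.symm
  have hΔTX : Integrable (fun ω => μ₀ (T ω) (X ω) - μh (T ω) (X ω)) P :=
    hμ₀TX.sub (.of_bound (hμh_meas.comp hTX).aestronglyMeasurable B
      (ae_of_all _ fun ω => hμh_bdd _ _))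
  set g : ℝ → 𝒳 → ℝ := fun t x => (μ₀ t x - μh t x) * h x with hg_def
  have hg : ∀ t, Measurable (g t) := fun t =>
    ((hμ₀_meas.comp (measurable_const.prodMk measurable_id)).sub
      (hμh_meas.comp (measurable_const.prodMk measurable_id))).mul hh
  have hgTX : Integrable (fun ω => g (T ω) (X ω)) P :=
    hΔTX.mul_bdd hhX (ae_of_all _ fun ω => hBh _)
  have hE := integrable_ipwWeight_mul_sub hX hT hT01 hπ₀_meas hπ₀ hc0 hc (hg 1) (hg 0) hgTX
  have hE_eq := integral_ipwWeight_mul_sub_eq_zero hX hT hT01 hπ₀_meas hπ₀ hc0 hc (hg 1) (hg 0) hgTX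
  have hwhh : ∀ ω, ‖wh (T ω) (X ω) * h (X ω)‖ ≤ B * Bh := fun ω =>
    norm_mul_le_of_le (hwh_bdd _ _) (hBh _)
  have hwhh_meas : StronglyMeasurable[MeasurableSpace.comap (fun ω => (T ω, X ω)) inferInstance]
      fun ω => wh (T ω) (X ω) * h (X ω) :=
    ((hwh_meas.mul (hh.comp measurable_snd)).comp (comap_measurable _)).stronglyMeasurable
  have hA : Integrable (fun ω => wh (T ω) (X ω) * h (X ω) * (Y ω - μ₀ (T ω) (X ω))) P :=
    (hY1.sub hμ₀TX).bdd_mul (hwhh_meas.mono hTX.comap_le).aestronglyMeasurable (ae_of_all _ hwhh)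
  have hA_eq : ∫ ω, wh (T ω) (X ω) * h (X ω) * (Y ω - μ₀ (T ω) (X ω)) ∂P = 0 :=
    integral_mul_sub_eq_zero_of_ae_eq_condExp hTX.comap_le hwhh_meas hwhh hY1 hμ₀
  have hR : Integrable (fun ω => (wh (T ω) (X ω) - ipwWeight π₀ (T ω) (X ω))
      * (μ₀ (T ω) (X ω) - μh (T ω) (X ω)) * h (X ω)) P :=
    (hΔTX.bdd_mul ((hwh_meas.sub (measurable_ipwWeight hπ₀_meas)).comp hTX).aestronglyMeasurable
      (ae_of_all _ fun ω => (norm_sub_le _ _).trans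
        (add_le_add (hwh_bdd _ _) (abs_ipwWeight_le hc0 (hc _) (hT01 ω))))).mul_bdd hhX
      (ae_of_all _ fun ω => hBh _)
  have hsum := integral_add' (hR.add hA) hE
  rw [integral_add' hR hA, hA_eq, hE_eq, add_zero, add_zero] at hsum
  rw [← hsum]
  exact integral_congr_ae (ae_of_all _ fun ω => by simp only [Pi.add_apply, hg_def]; ring)

/-- **DR leakage factorizes into a product of nuisance errors.** For bounded
measurable estimates μ̂, ω̂ and every bounded measurable h,
E[(φ(V;(μ̂,ω̂)) − τ₀(X))·h(X)] = E[(ω̂ − ω₀)(T,X)·(μ₀ − μ̂)(T,X)·h(X)]. -/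
theorem dr_leakage_product
    {Ω 𝒳 : Type*} [MeasurableSpace Ω] [MeasurableSpace 𝒳]
    (P : Measure Ω) [IsProbabilityMeasure P]
    (X : Ω → 𝒳) (T Y : Ω → ℝ)
    (hX : Measurable X) (hT : Measurable T) (hY : Measurable Y)
    (hT01 : ∀ ω, T ω = 0 ∨ T ω = 1) (hY1 : Integrable Y P)
    (μ₀ : ℝ → 𝒳 → ℝ) (hμ₀_meas : Measurable fun p : ℝ × 𝒳 => μ₀ p.1 p.2)
    (hμ₀ : (fun ω => μ₀ (T ω) (X ω))
        =ᵐ[P] P[Y | MeasurableSpace.comap (fun ω => (T ω, X ω)) inferInstance])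
    (π₀ : 𝒳 → ℝ) (hπ₀_meas : Measurable π₀)
    (hπ₀ : (fun ω => π₀ (X ω)) =ᵐ[P] P[T | MeasurableSpace.comap X inferInstance])
    (c : ℝ) (hc0 : 0 < c) (hc2 : c < 1 / 2)
    (hc : ∀ x, c ≤ π₀ x ∧ π₀ x ≤ 1 - c)
    (w₀ : ℝ → 𝒳 → ℝ)
    (hw₀ : ∀ t x, w₀ t x = (2 * t - 1) / (t * π₀ x + (1 - t) * (1 - π₀ x)))
    (μh wh : ℝ → 𝒳 → ℝ)
    (hμh_meas : Measurable fun p : ℝ × 𝒳 => μh p.1 p.2)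
    (hwh_meas : Measurable fun p : ℝ × 𝒳 => wh p.1 p.2)
    (B : ℝ) (hμh_bdd : ∀ t x, |μh t x| ≤ B) (hwh_bdd : ∀ t x, |wh t x| ≤ B) :
    ∀ (h : 𝒳 → ℝ), Measurable h → (∃ Bh : ℝ, ∀ x, |h x| ≤ Bh) →
      (∫ ω, (wh (T ω) (X ω) * (Y ω - μh (T ω) (X ω)) + μh 1 (X ω) - μh 0 (X ω)
            - (μ₀ 1 (X ω) - μ₀ 0 (X ω))) * h (X ω) ∂P)
        = ∫ ω, (wh (T ω) (X ω) - w₀ (T ω) (X ω))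
            * (μ₀ (T ω) (X ω) - μh (T ω) (X ω)) * h (X ω) ∂P :=
  dr_leakage_product_general P X T Y hX hT hT01 hY1 μ₀ hμ₀_meas hμ₀ π₀ hπ₀_meas hπ₀ c hc0 hc w₀ hw₀
    μh wh hμh_meas hwh_meas B hμh_bdd hwh_bdd
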